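/- arXiv:0809.0730 — 2 statements merged into one kernel-verified Lean document; each statement's English description precedes it below -/
import Mathlib

section
/- Let X be a quandle. The subgroups C_n^D(X) ⊆ C_n^R(X) generated by n-tuples (x_1,...,x_n) with x_{i+1} = x_i for some i form a subcomplex: the rack boundary ∂ maps C_n^D(X) into C_{n-1}^D(X). -/
/-!
Let `x` have equal adjacent entries `x i = x j`, `j = i + 1`. The two faces of `∂x` at `i`
and `j` coincide (for the action face this uses `x i * x i = x i`) and carry opposite signs,
so they cancel. Every other face still contains the pair `x i, x j` in adjacent positions,
either untouched or with both entries acted on by the same element, hence is degenerate.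
-/

/-- A quandle: an idempotent rack. -/
structure MyQuandle (X : Type) where
  act : X → X → X
  idem : ∀ a, act a a = a
  bij : ∀ b, Function.Bijective (fun x => act x b)
  dist : ∀ a b c, act (act a b) c = act (act a c) (act b c)

variable {X : Type}

def delTup {n : ℕ} (x : Fin (n + 1) → X) (i : Fin (n + 1)) : Fin n → X :=
  fun j => x (i.succAbove j)

def actTup {n : ℕ} (Q : MyQuandle X) (x : Fin (n + 1) → X) (i : Fin (n + 1)) :
    Fin n → X :=
  fun j => if i.succAbove j < i then Q.act (x (i.succAbove j)) (x i)
           else x (i.succAbove j)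

/-- Rack boundary of a basis tuple (`0`-based form of
`∂(x_1,…,x_n) = Σ_{i=2}^n (-1)^i [(…,x̂_i,…) - (x_1*x_i,…,x_{i-1}*x_i,x_{i+1},…)]`). -/
noncomputable def bdryBasis (Q : MyQuandle X) (n : ℕ) (x : Fin (n + 1) → X) :
    (Fin n → X) →₀ ℤ :=
  ∑ i : Fin (n + 1), if 1 ≤ (i : ℕ) then
      ((-1 : ℤ) ^ ((i : ℕ) + 1)) •
        (Finsupp.single (delTup x i) 1 - Finsupp.single (actTup Q x i) 1)
    else 0

/-- The rack boundary homomorphism `∂ : C_{n+1}^R(X) → C_n^R(X)`. -/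
noncomputable def bdry (Q : MyQuandle X) (n : ℕ) :
    ((Fin (n + 1) → X) →₀ ℤ) →ₗ[ℤ] ((Fin n → X) →₀ ℤ) :=
  Finsupp.lsum ℤ fun x => LinearMap.toSpanSingleton ℤ _ (bdryBasis Q n x)

/-- The degenerate subgroup `C_n^D(X)`: generated by tuples with two equal
consecutive entries. -/
noncomputable def degenerate (X : Type) (n : ℕ) : Submodule ℤ ((Fin n → X) →₀ ℤ) :=
  Submodule.span ℤ
    {f | ∃ x : Fin n → X, (∃ i j : Fin n, (j : ℕ) = (i : ℕ) + 1 ∧ x i = x j) ∧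
      f = Finsupp.single x 1}

open Finsupp

lemma Fin.val_succAbove {n : ℕ} (k : Fin (n + 1)) (p : Fin n) :
    (k.succAbove p : ℕ) = if (p : ℕ) < k then (p : ℕ) else p + 1 := by
  split_ifs with h
  · rw [Fin.succAbove_of_castSucc_lt _ _ (by simpa [Fin.lt_def] using h)]; rfl
  · rw [Fin.succAbove_of_le_castSucc _ _ (by simpa [Fin.le_def] using h)]; rfl

lemma Fin.succAbove_eq_or_swap {n : ℕ} {i j : Fin (n + 1)} (hij : (j : ℕ) = i + 1) (p : Fin n) :
    i.succAbove p = j.succAbove p ∨ (i.succAbove p = j ∧ j.succAbove p = i) := by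
  by_cases h : (p : ℕ) = i
  · right
    constructor <;> ext <;> rw [Fin.val_succAbove] <;> split_ifs <;> omega
  · left
    ext
    rw [Fin.val_succAbove, Fin.val_succAbove]
    split_ifs <;> omega

lemma Fin.exists_succAbove_eq_adjacent {n : ℕ} {k i j : Fin (n + 1)} (hij : (j : ℕ) = i + 1)
    (hki : k ≠ i) (hkj : k ≠ j) :
    ∃ p q : Fin n, (q : ℕ) = p + 1 ∧ k.succAbove p = i ∧ k.succAbove q = j := by
  obtain ⟨p, hp⟩ := Fin.exists_succAbove_eq hki.symm
  obtain ⟨q, hq⟩ := Fin.exists_succAbove_eq hkj.symm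
  refine ⟨p, q, ?_, hp, hq⟩
  have hpv := congrArg Fin.val hp
  have hqv := congrArg Fin.val hq
  have hki' := Fin.val_ne_of_ne hki
  have hkj' := Fin.val_ne_of_ne hkj
  rw [Fin.val_succAbove] at hpv hqv
  split_ifs at hpv hqv <;> omega

def IsDegenerate {n : ℕ} (x : Fin n → X) : Prop :=
  ∃ i j : Fin n, (j : ℕ) = i + 1 ∧ x i = x j

lemma single_mem_degenerate {n : ℕ} {x : Fin n → X} (hx : IsDegenerate x) :
    single x 1 ∈ degenerate X n :=
  Submodule.subset_span ⟨x, hx, rfl⟩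

section Adjacent

variable {n : ℕ} {x : Fin (n + 1) → X} {i j : Fin (n + 1)}

lemma delTup_eq_of_adjacent (hij : (j : ℕ) = i + 1) (hx : x i = x j) :
    delTup x i = delTup x j := by
  funext p
  rcases Fin.succAbove_eq_or_swap hij p with h | ⟨hi, hj⟩
  · simp only [delTup, h]
  · simp only [delTup, hi, hj, hx]

lemma actTup_eq_of_adjacent (Q : MyQuandle X) (hij : (j : ℕ) = i + 1) (hx : x i = x j) :
    actTup Q x i = actTup Q x j := by
  funext p
  simp only [actTup]
  rcases Fin.succAbove_eq_or_swap hij p with h | ⟨hi, hj⟩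
  · have hne := Fin.val_ne_of_ne (Fin.succAbove_ne i p)
    have hlt : j.succAbove p < i ↔ j.succAbove p < j := by
      rw [Fin.lt_def, Fin.lt_def, ← h]
      omega
    simp only [h, hx, hlt]
  · rw [hi, hj, if_neg (by rw [Fin.lt_def]; omega), if_pos (by rw [Fin.lt_def]; omega), hx,
      Q.idem]

lemma isDegenerate_delTup_of_ne {k : Fin (n + 1)} (hij : (j : ℕ) = i + 1) (hx : x i = x j)
    (hki : k ≠ i) (hkj : k ≠ j) : IsDegenerate (delTup x k) := by
  obtain ⟨p, q, hpq, hp, hq⟩ := Fin.exists_succAbove_eq_adjacent hij hki hkj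
  exact ⟨p, q, hpq, by simp only [delTup, hp, hq, hx]⟩

lemma isDegenerate_actTup_of_ne (Q : MyQuandle X) {k : Fin (n + 1)} (hij : (j : ℕ) = i + 1)
    (hx : x i = x j) (hki : k ≠ i) (hkj : k ≠ j) : IsDegenerate (actTup Q x k) := by
  obtain ⟨p, q, hpq, hp, hq⟩ := Fin.exists_succAbove_eq_adjacent hij hki hkj
  have hkj' := Fin.val_ne_of_ne hkj
  have hlt : i < k ↔ j < k := by
    rw [Fin.lt_def, Fin.lt_def]
    omega
  exact ⟨p, q, hpq, by simp only [actTup, hp, hq, hx, hlt]⟩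

end Adjacent

lemma actTup_zero (Q : MyQuandle X) {n : ℕ} (x : Fin (n + 1) → X) :
    actTup Q x 0 = delTup x 0 := by
  funext p
  simp [actTup, delTup]

/-- The `i = 0` summand, omitted in `bdryBasis`, vanishes anyway. -/
lemma bdryBasis_eq_sum (Q : MyQuandle X) (n : ℕ) (x : Fin (n + 1) → X) :
    bdryBasis Q n x = ∑ i : Fin (n + 1),
      (-1 : ℤ) ^ ((i : ℕ) + 1) • (single (delTup x i) 1 - single (actTup Q x i) 1) := by
  refine Finset.sum_congr rfl fun i _ => ?_
  split_ifs with hi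
  · rfl
  · obtain rfl : i = 0 := Fin.ext (by rw [Fin.val_zero]; omega)
    rw [actTup_zero, sub_self, smul_zero]

lemma bdryBasis_mem_degenerate (Q : MyQuandle X) {n : ℕ} {x : Fin (n + 1) → X}
    {i j : Fin (n + 1)} (hij : (j : ℕ) = i + 1) (hx : x i = x j) :
    bdryBasis Q n x ∈ degenerate X n := by
  classical
  have hne : i ≠ j := by rintro rfl; omega
  have hsign : (-1 : ℤ) ^ ((i : ℕ) + 1) + (-1) ^ ((i : ℕ) + 1 + 1) = 0 := by ring
  rw [bdryBasis_eq_sum, ← Finset.sum_sdiff (Finset.subset_univ {i, j}), Finset.sum_pair hne,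
    delTup_eq_of_adjacent hij hx, actTup_eq_of_adjacent Q hij hx, hij, ← add_smul, hsign,
    zero_smul, add_zero]
  refine Submodule.sum_mem _ fun k hk => ?_
  simp only [Finset.mem_sdiff, Finset.mem_univ, Finset.mem_insert, Finset.mem_singleton,
    not_or, true_and] at hk
  exact Submodule.smul_mem _ _ (Submodule.sub_mem _
    (single_mem_degenerate (isDegenerate_delTup_of_ne hij hx hk.1 hk.2))
    (single_mem_degenerate (isDegenerate_actTup_of_ne Q hij hx hk.1 hk.2)))

theorem degenerate_le_comap_bdry (Q : MyQuandle X) (n : ℕ) :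
    degenerate X (n + 1) ≤ (degenerate X n).comap (bdry Q n) := by
  refine Submodule.span_le.2 ?_
  rintro _ ⟨x, ⟨i, j, hij, hx⟩, rfl⟩
  simpa [bdry] using bdryBasis_mem_degenerate Q hij hx

/-- For a quandle, the degenerate chains form a subcomplex: the rack boundary
maps `C_{n+1}^D(X)` into `C_n^D(X)`. -/
theorem degenerate_subcomplex (Q : MyQuandle X) (n : ℕ)
    (c : (Fin (n + 1) → X) →₀ ℤ) (hc : c ∈ degenerate X (n + 1)) :
    bdry Q n c ∈ degenerate X n :=
  degenerate_le_comap_bdry Q n hc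
end

section
/- In the quandle chain complex of the dihedral quandle R_4, writing its elements as a=1, b=0, a*b=3, b*a=2, the chain 2·(a, a*b) is a boundary: ∂(-(a*b, b, a*b) - (a*b, b*a, a*b)) = 2(a, a*b) in C_2^Q(R_4). Hence the homology class of (a, a*b) in H_2^Q(R_4) has order dividing 2. -/
/-- The dihedral quandle operation on `R_4 = ZMod 4`: `i * j = 2j - i`. -/
def dop (i j : ZMod 4) : ZMod 4 := 2 * j - i

/-- Quandle boundary of a basis triple:
`∂(x,y,z) = [(x,z) - (x*y,z)] - [(x,y) - (x*z,y*z)]`. -/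
noncomputable def d3 (x y z : ZMod 4) : (ZMod 4 × ZMod 4) →₀ ℤ :=
  Finsupp.single (x, z) 1 - Finsupp.single (dop x y, z) 1
    - Finsupp.single (x, y) 1 + Finsupp.single (dop x z, dop y z) 1

/-- The degenerate 2-chains: spanned by pairs with equal entries. -/
noncomputable def deg2 : Submodule ℤ ((ZMod 4 × ZMod 4) →₀ ℤ) :=
  Submodule.span ℤ {f | ∃ x : ZMod 4, f = Finsupp.single (x, x) 1}

/-!
In `R_4` the quandle `*` is involutory, and moreover `x * (y * x) = x * y` because `4 = 0`.
Hence the boundaries of `(x, y, x)` and `(x, y * x, x)` cancel except for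
`2 (x, x) - 2 (x * y, x)`; for `x = a * b`, `y = b` the first term is degenerate and
`x * y = a`.
-/

open Finsupp

theorem dop_self (x : ZMod 4) : dop x x = x := by
  unfold dop; ring

theorem dop_dop_same_right (x y : ZMod 4) : dop (dop y x) x = y := by
  unfold dop; ring

theorem dop_left_dop (x y : ZMod 4) : dop x (dop y x) = dop x y := by
  have four_eq_zero : (4 : ZMod 4) = 0 := rfl
  unfold dop
  linear_combination (x - y) * four_eq_zero

theorem d3_add_d3_dop (x y : ZMod 4) :
    d3 x y x + d3 x (dop y x) x = (2 : ℤ) • (single (x, x) 1 - single (dop x y, x) 1) := by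
  simp only [d3, dop_self, dop_dop_same_right, dop_left_dop]
  abel

theorem mk_single_diag_eq_zero (x : ZMod 4) :
    Submodule.Quotient.mk (p := deg2) (single (x, x) 1) = 0 :=
  (Submodule.Quotient.mk_eq_zero _).2 (Submodule.subset_span ⟨x, rfl⟩)

/-- With `a = 1`, `b = 0`, `a*b = 3`, `b*a = 2` in `R_4`:
`∂(-(a*b, b, a*b) - (a*b, b*a, a*b)) = 2(a, a*b)` in `C_2^Q(R_4)`
(i.e. modulo degenerate chains); hence the class of `(a, a*b)` in
`H_2^Q(R_4)` has order dividing `2`. -/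
theorem two_t1_is_boundary :
    Submodule.Quotient.mk (p := deg2) (-(d3 3 0 3) - d3 3 2 3) =
      (2 : ℤ) • Submodule.Quotient.mk (p := deg2)
        (Finsupp.single ((1 : ZMod 4), (3 : ZMod 4)) 1) := by
  have hsum : d3 3 0 3 + d3 3 2 3 = (2 : ℤ) • (single (3, 3) 1 - single (1, 3) 1) :=
    d3_add_d3_dop 3 0
  rw [← neg_add', hsum, Submodule.Quotient.mk_neg, Submodule.Quotient.mk_smul,
    Submodule.Quotient.mk_sub, mk_single_diag_eq_zero, zero_sub, smul_neg, neg_neg]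
end
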